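/- Let B : ℝ → ℝ be defined by B(x) = x/(exp(x) − 1) for x ≠ 0 and B(0) = 1. Then for every ε > 0 and u₀ ∈ ℝ, the function φ_{ε,u₀} : ℝ → ℝ defined by φ_{ε,u₀}(u) = ε·( B((u − u₀)/ε) − B((1 − u₀)/ε) ) + B'((1 − u₀)/ε)·(1 − u) is strictly convex, nonnegative, and satisfies φ_{ε,u₀}(1) = 0 and φ_{ε,u₀}'(1) = 0, where B' denotes the derivative of B. -/

import Mathlib

/-- The Bernoulli function `B(x) = x / (exp x - 1)`, extended by `B 0 = 1`. -/
noncomputable def bernoulliFn : ℝ → ℝ := fun x =>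
  if x = 0 then 1 else x / (Real.exp x - 1)

open Real

noncomputable def Fb : ℝ → ℝ := fun x => if x = 0 then 1 else (Real.exp x - 1) / x

lemma Fb_hasSum (x : ℝ) : HasSum (fun n : ℕ => x ^ n / (Nat.factorial (n+1))) (Fb x) := by
  rcases eq_or_ne x 0 with h | h
  · subst h
    have : (fun n : ℕ => (0:ℝ) ^ n / (Nat.factorial (n+1))) = fun n => if n = 0 then (1:ℝ) else 0 := by
      funext n; rcases n with _ | n <;> simp
    rw [this, Fb]
    simpa using hasSum_ite_eq 0 (1:ℝ)
  · have he : HasSum (fun n : ℕ => x ^ n / (Nat.factorial n)) (Real.exp x) := by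
      rw [Real.exp_eq_exp_ℝ]
      exact NormedSpace.expSeries_div_hasSum_exp x
    have h1 : HasSum (fun n : ℕ => x ^ (n + 1) / (Nat.factorial (n+1))) (Real.exp x - 1) := by
      have := (hasSum_nat_add_iff' 1).mpr he
      simpa using this
    have h2 := h1.div_const x
    have : (fun n : ℕ => x ^ (n + 1) / (Nat.factorial (n+1)) / x) = fun n : ℕ => x ^ n / (Nat.factorial (n+1)) := by
      funext n; field_simp; ring
    rw [this] at h2
    simpa [Fb, h] using h2

noncomputable def pFb : FormalMultilinearSeries ℝ ℝ ℝ := fun n =>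
  ((Nat.factorial (n+1) : ℝ))⁻¹ • ContinuousMultilinearMap.mkPiAlgebraFin ℝ n ℝ

lemma pFb_apply (n : ℕ) (y : ℝ) : (pFb n) (fun _ => y) = y ^ n / (Nat.factorial (n+1)) := by
  simp [pFb, ContinuousMultilinearMap.mkPiAlgebraFin_apply, List.prod_ofFn, div_eq_inv_mul]

lemma pFb_norm (n : ℕ) : ‖pFb n‖ ≤ ((Nat.factorial n : ℝ))⁻¹ := by
  have h1 : ‖pFb n‖ ≤ ‖((Nat.factorial (n+1) : ℝ))⁻¹‖ * ‖ContinuousMultilinearMap.mkPiAlgebraFin ℝ n ℝ‖ :=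
    ContinuousMultilinearMap.opNorm_smul_le _ _
  rw [ContinuousMultilinearMap.norm_mkPiAlgebraFin] at h1
  simp only [mul_one, norm_inv, Real.norm_natCast] at h1
  refine h1.trans ?_
  apply inv_anti₀
  · exact_mod_cast Nat.factorial_pos n
  · exact_mod_cast Nat.factorial_le (Nat.le_succ n)

lemma pFb_radius : pFb.radius = ⊤ := by
  apply FormalMultilinearSeries.radius_eq_top_of_summable_norm
  intro r
  apply Summable.of_nonneg_of_le (fun n => by positivity)
    (fun n => mul_le_mul_of_nonneg_right (pFb_norm n) (by positivity))
  simpa [div_eq_inv_mul, mul_comm] using Real.summable_pow_div_factorial r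

lemma Fb_hasFPowerSeries : HasFPowerSeriesOnBall Fb pFb 0 ⊤ := by
  refine ⟨by rw [pFb_radius], by simp, ?_⟩
  intro y _
  have h := Fb_hasSum y
  have hc : ∀ n, y ^ n * pFb.coeff n = y ^ n / (Nat.factorial (n+1)) := by
    intro n
    simp only [FormalMultilinearSeries.coeff, pFb, ContinuousMultilinearMap.smul_apply,
      ContinuousMultilinearMap.mkPiAlgebraFin_apply, smul_eq_mul, div_eq_inv_mul]
    have : (List.ofFn (1 : Fin n → ℝ)).prod = 1 := by
      simp [List.prod_ofFn]
    rw [this, mul_one, mul_comm]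
  simp only [FormalMultilinearSeries.apply_eq_pow_smul_coeff, smul_eq_mul, hc]
  simpa using h

lemma Fb_analytic : AnalyticOnNhd ℝ Fb Set.univ := by
  intro x _
  have h := Fb_hasFPowerSeries.analyticOnNhd
  exact h x (by simp)

lemma Fb_contDiff : ContDiff ℝ (⊤ : ℕ∞) Fb :=
  (contDiff_omega_iff_analyticOnNhd.mpr Fb_analytic).of_le (mod_cast le_top)

lemma Fb_analytic_deriv : AnalyticOnNhd ℝ (deriv Fb) Set.univ := Fb_analytic.deriv
lemma Fb_analytic_deriv2 : AnalyticOnNhd ℝ (deriv (deriv Fb)) Set.univ := Fb_analytic_deriv.deriv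

lemma Fb_diff (x : ℝ) : DifferentiableAt ℝ Fb x := (Fb_analytic x trivial).differentiableAt
lemma Fb_diff1 (x : ℝ) : DifferentiableAt ℝ (deriv Fb) x :=
  (Fb_analytic_deriv x trivial).differentiableAt
lemma Fb_diff2 (x : ℝ) : DifferentiableAt ℝ (deriv (deriv Fb)) x :=
  (Fb_analytic_deriv2 x trivial).differentiableAt

lemma Fb_pos (x : ℝ) : 0 < Fb x := by
  rcases lt_trichotomy x 0 with h | h | h
  · have h1 : Real.exp x - 1 < 0 := by
      have := Real.exp_lt_one_iff.mpr h; linarith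
    rw [Fb, if_neg (ne_of_lt h)]
    exact div_pos_of_neg_of_neg h1 h
  · simp [Fb, h]
  · have h1 : 0 < Real.exp x - 1 := by
      have : (1:ℝ) < Real.exp x := by
        rw [Real.one_lt_exp_iff]; exact h
      linarith
    rw [Fb, if_neg (ne_of_gt h)]
    exact div_pos h1 h

lemma Fb_id_mul (x : ℝ) : x * Fb x = Real.exp x - 1 := by
  rcases eq_or_ne x 0 with h | h
  · simp [Fb, h]
  · rw [Fb, if_neg h, mul_div_cancel₀ _ h]

lemma Fb_identA (x : ℝ) : Fb x + x * deriv Fb x = Real.exp x := by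
  have hfg : (fun x : ℝ => x * Fb x) = fun x => Real.exp x - 1 := funext Fb_id_mul
  have h1 : HasDerivAt (fun x : ℝ => x * Fb x) (1 * Fb x + x * deriv Fb x) x :=
    (hasDerivAt_id x).mul (Fb_diff x).hasDerivAt
  rw [hfg] at h1
  have h2 : HasDerivAt (fun x : ℝ => Real.exp x - 1) (Real.exp x) x :=
    (Real.hasDerivAt_exp x).sub_const 1
  have := h1.unique h2
  linarith

lemma Fb_identB (x : ℝ) : 2 * deriv Fb x + x * deriv (deriv Fb) x = Real.exp x := by
  have hfg : (fun x : ℝ => Fb x + x * deriv Fb x) = fun x => Real.exp x := funext Fb_identA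
  have h1 : HasDerivAt (fun x : ℝ => Fb x + x * deriv Fb x)
      (deriv Fb x + (1 * deriv Fb x + x * deriv (deriv Fb) x)) x :=
    (Fb_diff x).hasDerivAt.add ((hasDerivAt_id x).mul (Fb_diff1 x).hasDerivAt)
  rw [hfg] at h1
  have := h1.unique (Real.hasDerivAt_exp x)
  linarith

lemma Fb_identC (x : ℝ) : 3 * deriv (deriv Fb) x + x * deriv (deriv (deriv Fb)) x
    = Real.exp x := by
  have hfg : (fun x : ℝ => 2 * deriv Fb x + x * deriv (deriv Fb) x) = fun x => Real.exp x :=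
    funext Fb_identB
  have h1 : HasDerivAt (fun x : ℝ => 2 * deriv Fb x + x * deriv (deriv Fb) x)
      (2 * deriv (deriv Fb) x + (1 * deriv (deriv Fb) x + x * deriv (deriv (deriv Fb)) x)) x :=
    (((Fb_diff1 x).hasDerivAt).const_mul 2).add ((hasDerivAt_id x).mul (Fb_diff2 x).hasDerivAt)
  rw [hfg] at h1
  have := h1.unique (Real.hasDerivAt_exp x)
  linarith

lemma Fb_zero : Fb 0 = 1 := by simp [Fb]
lemma Fb_deriv_zero : deriv Fb 0 = 1 / 2 := by
  have := Fb_identA 0; have := Fb_identB 0; simp at *; linarith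
lemma Fb_deriv2_zero : deriv (deriv Fb) 0 = 1 / 3 := by
  have := Fb_identC 0; simp at *; linarith

private noncomputable def hfun : ℝ → ℝ := fun x => (x - 2) * Real.exp x + x + 2
private noncomputable def hpfun : ℝ → ℝ := fun x => (x - 1) * Real.exp x + 1

private lemma hfun_hasDeriv (x : ℝ) : HasDerivAt hfun (hpfun x) x := by
  have h1 : HasDerivAt (fun x : ℝ => (x - 2) * Real.exp x + x + 2)
      (1 * Real.exp x + (x - 2) * Real.exp x + 1) x :=
    ((((hasDerivAt_id x).sub_const 2).mul (Real.hasDerivAt_exp x)).add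
      (hasDerivAt_id x)).add_const 2
  unfold hfun; convert h1 using 1
  simp [hpfun]; ring

private lemma hpfun_hasDeriv (x : ℝ) : HasDerivAt hpfun (x * Real.exp x) x := by
  have h1 : HasDerivAt (fun x : ℝ => (x - 1) * Real.exp x + 1)
      (1 * Real.exp x + (x - 1) * Real.exp x) x :=
    (((hasDerivAt_id x).sub_const 1).mul (Real.hasDerivAt_exp x)).add_const 1
  unfold hpfun; convert h1 using 1
  ring

private lemma hpfun_cont : Continuous hpfun := by
  unfold hpfun; continuity

private lemma hfun_cont : Continuous hfun := by
  unfold hfun; continuity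

private lemma hpfun_pos {x : ℝ} (hx : x ≠ 0) : 0 < hpfun x := by
  have h0 : hpfun 0 = 0 := by simp [hpfun]
  rcases hx.lt_or_gt with h | h
  · have hm : StrictAntiOn hpfun (Set.Iic 0) := by
      apply strictAntiOn_of_deriv_neg (convex_Iic 0) hpfun_cont.continuousOn
      intro y hy
      rw [interior_Iic] at hy
      rw [(hpfun_hasDeriv y).deriv]
      exact mul_neg_of_neg_of_pos hy (Real.exp_pos y)
    have := hm (Set.mem_Iic.mpr h.le) (Set.mem_Iic.mpr le_rfl) h
    rwa [h0] at this
  · have hm : StrictMonoOn hpfun (Set.Ici 0) := by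
      apply strictMonoOn_of_deriv_pos (convex_Ici 0) hpfun_cont.continuousOn
      intro y hy
      rw [interior_Ici] at hy
      rw [(hpfun_hasDeriv y).deriv]
      exact mul_pos hy (Real.exp_pos y)
    have := hm (Set.mem_Ici.mpr le_rfl) (Set.mem_Ici.mpr h.le) h
    rwa [h0] at this

private lemma xhfun_pos {x : ℝ} (hx : x ≠ 0) : 0 < x * hfun x := by
  have h0 : hfun 0 = 0 := by simp [hfun]
  have hmono : ∀ s : Set ℝ, Convex ℝ s → (∀ y ∈ interior s, y ≠ 0) → StrictMonoOn hfun s := by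
    intro s hs hy
    apply strictMonoOn_of_deriv_pos hs hfun_cont.continuousOn
    intro y hys
    rw [(hfun_hasDeriv y).deriv]
    exact hpfun_pos (hy y hys)
  rcases hx.lt_or_gt with h | h
  · have hm := hmono (Set.Iic 0) (convex_Iic 0) (by rw [interior_Iic]; exact fun y hy => ne_of_lt hy)
    have := hm (Set.mem_Iic.mpr h.le) (Set.mem_Iic.mpr le_rfl) h
    rw [h0] at this
    exact mul_pos_of_neg_of_neg h this
  · have hm := hmono (Set.Ici 0) (convex_Ici 0) (by rw [interior_Ici]; exact fun y hy => ne_of_gt hy)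
    have := hm (Set.mem_Ici.mpr le_rfl) (Set.mem_Ici.mpr h.le) h
    rw [h0] at this
    exact mul_pos h this

lemma Fb_key_pos (x : ℝ) : 0 < 2 * (deriv Fb x) ^ 2 - Fb x * deriv (deriv Fb) x := by
  rcases eq_or_ne x 0 with hx | hx
  · subst hx
    rw [Fb_zero, Fb_deriv_zero, Fb_deriv2_zero]
    norm_num
  · set E := Real.exp x with hE
    set a := Fb x with hadef
    set b := deriv Fb x with hbdef
    set c := deriv (deriv Fb) x with hcdef
    have ha : x * a = E - 1 := Fb_id_mul x
    have hb : a + x * b = E := Fb_identA x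
    have hc : 2 * b + x * c = E := Fb_identB x
    have ha' : a = (E - 1) / x := by rw [eq_div_iff hx]; linarith
    have hb' : b = (E - a) / x := by rw [eq_div_iff hx]; linarith
    have hc' : c = (E - 2 * b) / x := by rw [eq_div_iff hx]; linarith
    have key : 2 * b ^ 2 - a * c = (E * (x * hfun x)) / x ^ 4 := by
      rw [hc', hb', ha', hfun]
      field_simp
      ring
    rw [key]
    have h4 : (0:ℝ) < x ^ 4 := by positivity
    exact div_pos (mul_pos (Real.exp_pos x) (xhfun_pos hx)) h4

lemma bernoulliFn_eq : bernoulliFn = fun x => (Fb x)⁻¹ := by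
  funext x
  rcases eq_or_ne x 0 with h | h
  · simp [bernoulliFn, Fb, h]
  · rw [bernoulliFn, Fb, if_neg h, if_neg h, inv_div]

lemma bernoulliFn_hasDeriv (x : ℝ) :
    HasDerivAt bernoulliFn (-(deriv Fb x) / (Fb x) ^ 2) x := by
  rw [bernoulliFn_eq]
  exact (Fb_diff x).hasDerivAt.inv (ne_of_gt (Fb_pos x))

lemma bernoulliFn_deriv_eq :
    deriv bernoulliFn = fun x => -(deriv Fb x) / (Fb x) ^ 2 :=
  funext fun x => (bernoulliFn_hasDeriv x).deriv

lemma bernoulliFn_hasDeriv2 (x : ℝ) :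
    HasDerivAt (deriv bernoulliFn)
      ((-(deriv (deriv Fb) x) * (Fb x) ^ 2 - (-(deriv Fb x)) * (2 * Fb x ^ 1 * deriv Fb x))
        / ((Fb x) ^ 2) ^ 2) x := by
  rw [bernoulliFn_deriv_eq]
  exact ((Fb_diff1 x).hasDerivAt.neg).div ((Fb_diff x).hasDerivAt.pow 2)
    (pow_ne_zero 2 (ne_of_gt (Fb_pos x)))

lemma bernoulliFn_deriv2_pos (x : ℝ) :
    0 < (-(deriv (deriv Fb) x) * (Fb x) ^ 2 - (-(deriv Fb x)) * (2 * Fb x ^ 1 * deriv Fb x))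
        / ((Fb x) ^ 2) ^ 2 := by
  apply div_pos
  · have h1 := Fb_key_pos x
    have h2 := Fb_pos x
    nlinarith
  · exact pow_pos (pow_pos (Fb_pos x) 2) 2

lemma bernoulliFn_deriv_strictMono : StrictMono (deriv bernoulliFn) :=
  strictMono_of_deriv_pos fun x => by
    rw [(bernoulliFn_hasDeriv2 x).deriv]
    exact bernoulliFn_deriv2_pos x

lemma bernoulliFn_cont : Continuous bernoulliFn := by
  rw [bernoulliFn_eq]
  exact Fb_contDiff.continuous.inv₀ fun x => ne_of_gt (Fb_pos x)

theorem stmt_10 (ε u₀ : ℝ) (hε : 0 < ε) :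
    StrictConvexOn ℝ Set.univ (fun u : ℝ =>
        ε * (bernoulliFn ((u - u₀) / ε) - bernoulliFn ((1 - u₀) / ε))
          + deriv bernoulliFn ((1 - u₀) / ε) * (1 - u)) ∧
    (∀ u : ℝ, 0 ≤ ε * (bernoulliFn ((u - u₀) / ε) - bernoulliFn ((1 - u₀) / ε))
          + deriv bernoulliFn ((1 - u₀) / ε) * (1 - u)) ∧
    ε * (bernoulliFn ((1 - u₀) / ε) - bernoulliFn ((1 - u₀) / ε))
        + deriv bernoulliFn ((1 - u₀) / ε) * (1 - 1) = 0 ∧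
    deriv (fun u : ℝ =>
        ε * (bernoulliFn ((u - u₀) / ε) - bernoulliFn ((1 - u₀) / ε))
          + deriv bernoulliFn ((1 - u₀) / ε) * (1 - u)) 1 = 0 := by
  set c : ℝ := (1 - u₀) / ε with hc
  set φ : ℝ → ℝ := fun u =>
    ε * (bernoulliFn ((u - u₀) / ε) - bernoulliFn c) + deriv bernoulliFn c * (1 - u) with hφdef
  have hεne : ε ≠ 0 := ne_of_gt hε
  have hinner : ∀ u : ℝ, HasDerivAt (fun u : ℝ => (u - u₀) / ε) (1 / ε) u := fun u =>
    ((hasDerivAt_id u).sub_const u₀).div_const ε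
  have hφ : ∀ u : ℝ, HasDerivAt φ
      (deriv bernoulliFn ((u - u₀) / ε) - deriv bernoulliFn c) u := by
    intro u
    have hB : HasDerivAt bernoulliFn (deriv bernoulliFn ((u - u₀) / ε)) ((u - u₀) / ε) :=
      (bernoulliFn_hasDeriv _).differentiableAt.hasDerivAt
    have h1 : HasDerivAt (fun u : ℝ => bernoulliFn ((u - u₀) / ε))
        (deriv bernoulliFn ((u - u₀) / ε) * (1 / ε)) u := by exact hB.comp u (hinner u)
    have h2 := (h1.sub_const (bernoulliFn c)).const_mul ε
    have h3 : HasDerivAt (fun u : ℝ => 1 - u) (-1) u := (hasDerivAt_id u).const_sub 1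
    have h4 := h3.const_mul (deriv bernoulliFn c)
    have h5 := h2.add h4
    refine h5.congr_deriv ?_
    rw [mul_comm ε, mul_assoc, one_div_mul_cancel hεne]
    ring
  have hderivφ : deriv φ = fun u => deriv bernoulliFn ((u - u₀) / ε) - deriv bernoulliFn c :=
    funext fun u => (hφ u).deriv
  have hφ2 : ∀ u : ℝ, HasDerivAt (deriv φ)
      (((-(deriv (deriv Fb) ((u - u₀) / ε)) * (Fb ((u - u₀) / ε)) ^ 2
          - (-(deriv Fb ((u - u₀) / ε))) * (2 * Fb ((u - u₀) / ε) ^ 1 * deriv Fb ((u - u₀) / ε)))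
        / ((Fb ((u - u₀) / ε)) ^ 2) ^ 2) * (1 / ε)) u := by
    intro u
    rw [hderivφ]
    exact ((bernoulliFn_hasDeriv2 _).comp u (hinner u)).sub_const _
  have hφ2pos : ∀ u : ℝ, 0 < deriv (deriv φ) u := by
    intro u
    rw [(hφ2 u).deriv]
    exact mul_pos (bernoulliFn_deriv2_pos _) (by positivity)
  have hφcont : Continuous φ := by
    apply Continuous.add
    · exact continuous_const.mul ((bernoulliFn_cont.comp (by continuity)).sub continuous_const)
    · exact continuous_const.mul (by continuity)
  have hconv : StrictConvexOn ℝ Set.univ φ := by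
    apply strictConvexOn_univ_of_deriv2_pos hφcont
    intro x
    have : deriv^[2] φ = deriv (deriv φ) := rfl
    rw [this]
    exact hφ2pos x
  have hφ1 : φ 1 = 0 := by
    rw [hφdef]
    simp [hc]
  have hg1 : (1 - u₀) / ε = c := rfl
  have hnonneg : ∀ u : ℝ, 0 ≤ φ u := by
    intro u
    rcases lt_trichotomy u 1 with h | h | h
    · have hanti : StrictAntiOn φ (Set.Iic 1) := by
        apply strictAntiOn_of_deriv_neg (convex_Iic 1) hφcont.continuousOn
        intro x hx
        rw [interior_Iic] at hx
        have hx' : x < 1 := hx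
        rw [(hφ x).deriv]
        have hlt : (x - u₀) / ε < c := by
          rw [hc]
          exact (div_lt_div_iff_of_pos_right hε).mpr (by linarith)
        have := bernoulliFn_deriv_strictMono hlt
        linarith
      have := hanti (Set.mem_Iic.mpr h.le) (Set.mem_Iic.mpr le_rfl) h
      rw [hφ1] at this
      exact this.le
    · rw [h, hφ1]
    · have hmono : StrictMonoOn φ (Set.Ici 1) := by
        apply strictMonoOn_of_deriv_pos (convex_Ici 1) hφcont.continuousOn
        intro x hx
        rw [interior_Ici] at hx
        have hx' : (1:ℝ) < x := hx
        rw [(hφ x).deriv]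
        have hlt : c < (x - u₀) / ε := by
          rw [hc]
          exact (div_lt_div_iff_of_pos_right hε).mpr (by linarith)
        have := bernoulliFn_deriv_strictMono hlt
        linarith
      have := hmono (Set.mem_Ici.mpr le_rfl) (Set.mem_Ici.mpr h.le) h
      rw [hφ1] at this
      exact this.le
  refine ⟨hconv, hnonneg, by ring, ?_⟩
  have h9 := (hφ 1).deriv
  rw [h9]
  exact sub_self _
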